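/- Let Ω = [a, b] be a compact interval, σ > 0, π : Ω → ℝ twice continuously differentiable, T > 0, and let μ : [0, T] × Ω → ℝ be continuously differentiable in t and twice continuously differentiable in s (jointly continuously), with μ(t, s) > 0 everywhere, solving the Fokker–Planck equation ∂μ/∂t = ∂/∂s(σ·∂μ/∂s − μ·∂π/∂s) on (0, T) × Ω with no-flux boundary conditions σ·∂μ/∂s(t, a) − μ(t, a)·π'(a) = 0 and σ·∂μ/∂s(t, b) − μ(t, b)·π'(b) = 0 for all t. Define the free energy F(t) = ∫_Ω (−π(s)·μ(t, s) + σ·μ(t, s)·ln(μ(t, s))) ds. Then for every t ∈ (0, T), F is differentiable at t with F'(t) = −∫_Ω μ(t, s)·(∂/∂s(σ·ln μ(t, s) − π(s)))² ds ≤ 0; hence F is non-increasing along the Fokker–Planck dynamics. -/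

import Mathlib

/-!
Differentiating under the integral sign, the time derivative of the free energy is
`∫ (σ ln μ − π + σ) ∂ₜμ`. By the Fokker–Planck equation `∂ₜμ = ∂ₛJ` with flux
`J = σ ∂ₛμ − μ π' = μ ∂ₛ(σ ln μ − π)`; integrating by parts, the no-flux conditions kill the
boundary terms and leave `−∫ ∂ₛ(σ ln μ − π) J = −∫ μ (∂ₛ(σ ln μ − π))² ≤ 0`. Monotonicity
follows by the mean value theorem.
-/

open MeasureTheory Set

theorem hasDerivAt_setIntegral_of_continuous
    {Y E : Type*} [TopologicalSpace Y] [T2Space Y] [MeasurableSpace Y] [OpensMeasurableSpace Y]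
    {μ : Measure Y} [IsFiniteMeasureOnCompacts μ] [NormedAddCommGroup E] [NormedSpace ℝ E]
    [SecondCountableTopologyEither Y E]
    {f f' : ℝ → Y → E} (hf : Continuous f.uncurry) (hf' : Continuous f'.uncurry)
    (hderiv : ∀ x y, HasDerivAt (f · y) (f' x y) x) {s : Set Y} (hs : IsCompact s) (x₀ : ℝ) :
    HasDerivAt (fun x ↦ ∫ y in s, f x y ∂μ) (∫ y in s, f' x₀ y ∂μ) x₀ := by
  obtain ⟨C, hC⟩ := ((isCompact_closedBall x₀ 1).prod hs).exists_bound_of_continuousOn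
    hf'.continuousOn
  refine (hasDerivAt_integral_of_dominated_loc_of_deriv_le (bound := fun _ ↦ C)
    (Metric.ball_mem_nhds x₀ one_pos) (.of_forall fun x ↦ by fun_prop)
    ((hf.comp (.prodMk_right x₀)).continuousOn.integrableOn_compact hs) (by fun_prop)
    ?_ (integrableOn_const hs.measure_ne_top) (.of_forall fun y x _ ↦ hderiv x y)).2
  filter_upwards [ae_restrict_mem hs.isClosed.measurableSet] with y hy x hx
  exact hC (x, y) ⟨Metric.ball_subset_closedBall hx, hy⟩

theorem hasDerivAt_freeEnergyDensity {m : ℝ → ℝ} {m' x : ℝ} (p σ : ℝ)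
    (hm : HasDerivAt m m' x) (hpos : m x ≠ 0) :
    HasDerivAt (fun y ↦ -(p * m y) + σ * m y * Real.log (m y))
      ((-p + σ * Real.log (m x) + σ) * m') x := by
  refine (((hm.const_mul p).neg.add (((Real.hasDerivAt_mul_log hpos).comp x hm).const_mul σ)
    ).congr_deriv (by ring)).congr_of_eventuallyEq (.of_forall fun y ↦ ?_)
  simp only [Pi.add_apply, Pi.neg_apply, Function.comp_apply]
  ring

theorem integral_chemicalPotential_mul_deriv_flux {a b σ : ℝ}
    {π dπ dπ2 m dm d2m : ℝ → ℝ}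
    (hπ : ∀ s, HasDerivAt π (dπ s) s) (hdπ : ∀ s, HasDerivAt dπ (dπ2 s) s)
    (hdπ2 : Continuous dπ2) (hm : ∀ s, HasDerivAt m (dm s) s)
    (hdm : ∀ s, HasDerivAt dm (d2m s) s) (hd2m : Continuous d2m) (hpos : ∀ s, 0 < m s)
    (hflux_a : σ * dm a - m a * dπ a = 0) (hflux_b : σ * dm b - m b * dπ b = 0) :
    ∫ s in a..b, (σ * Real.log (m s) - π s + σ) * (σ * d2m s - (dm s * dπ s + m s * dπ2 s))
      = -∫ s in a..b, m s * (σ * dm s / m s - dπ s) ^ 2 := by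
  have hmc : Continuous m := continuous_iff_continuousAt.2 fun s ↦ (hm s).continuousAt
  have hdmc : Continuous dm := continuous_iff_continuousAt.2 fun s ↦ (hdm s).continuousAt
  have hdπc : Continuous dπ := continuous_iff_continuousAt.2 fun s ↦ (hdπ s).continuousAt
  have hpotential : ∀ s, HasDerivAt (fun s ↦ σ * Real.log (m s) - π s + σ)
      (σ * dm s / m s - dπ s) s := fun s ↦
    ((((hm s).log (hpos s).ne').const_mul σ).sub (hπ s)).add_const σ |>.congr_deriv (by ring)
  have hflux : ∀ s, HasDerivAt (fun s ↦ σ * dm s - m s * dπ s)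
      (σ * d2m s - (dm s * dπ s + m s * dπ2 s)) s := fun s ↦
    ((hdm s).const_mul σ).sub ((hm s).mul (hdπ s))
  have hpotential_cont : Continuous fun s ↦ σ * dm s / m s - dπ s := by
    fun_prop (disch := exact fun s ↦ (hpos s).ne')
  have hflux_cont : Continuous fun s ↦ σ * d2m s - (dm s * dπ s + m s * dπ2 s) := by fun_prop
  rw [intervalIntegral.integral_mul_deriv_eq_deriv_mul (fun s _ ↦ hpotential s)
    (fun s _ ↦ hflux s) (hpotential_cont.intervalIntegrable a b)
    (hflux_cont.intervalIntegrable a b), hflux_a, hflux_b]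
  have hflux_eq : ∀ s, σ * dm s - m s * dπ s = m s * (σ * dm s / m s - dπ s) := fun s ↦ by
    field_simp [(hpos s).ne']
  simp only [hflux_eq, mul_zero, sub_zero, zero_sub]
  congr 2; ext s; ring

theorem free_energy_dissipation_general
    (a b σ T : ℝ) (hab : a < b)
    (π dπ dπ2 : ℝ → ℝ)
    (hπ : ∀ s, HasDerivAt π (dπ s) s)
    (hdπ : ∀ s, HasDerivAt dπ (dπ2 s) s)
    (hdπ2cont : Continuous dπ2)
    (μ μt μs μss : ℝ → ℝ → ℝ)
    (hμt : ∀ t s, HasDerivAt (fun t' => μ t' s) (μt t s) t)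
    (hμs : ∀ t s, HasDerivAt (fun s' => μ t s') (μs t s) s)
    (hμss : ∀ t s, HasDerivAt (fun s' => μs t s') (μss t s) s)
    (hμcont : Continuous fun p : ℝ × ℝ => μ p.1 p.2)
    (hμtcont : Continuous fun p : ℝ × ℝ => μt p.1 p.2)
    (hμsscont : Continuous fun p : ℝ × ℝ => μss p.1 p.2)
    (hμpos : ∀ t s, 0 < μ t s)
    (hPDE : ∀ t ∈ Ioo 0 T, ∀ s ∈ Icc a b,
      μt t s = σ * μss t s - (μs t s * dπ s + μ t s * dπ2 s))
    (hbc_a : ∀ t ∈ Ioo 0 T, σ * μs t a - μ t a * dπ a = 0)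
    (hbc_b : ∀ t ∈ Ioo 0 T, σ * μs t b - μ t b * dπ b = 0)
    (F : ℝ → ℝ)
    (hF : ∀ t, F t = ∫ s in Icc a b,
      (-(π s * μ t s) + σ * μ t s * Real.log (μ t s))) :
    (∀ t ∈ Ioo 0 T,
      HasDerivAt F
        (-∫ s in Icc a b, μ t s * (σ * μs t s / μ t s - dπ s) ^ 2) t ∧
      (-∫ s in Icc a b, μ t s * (σ * μs t s / μ t s - dπ s) ^ 2) ≤ 0) ∧
    AntitoneOn F (Icc 0 T) := by
  have hπc : Continuous π := continuous_iff_continuousAt.2 fun s ↦ (hπ s).continuousAt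
  have hlogμ : Continuous fun p : ℝ × ℝ ↦ Real.log (μ p.1 p.2) :=
    hμcont.log fun p ↦ (hμpos p.1 p.2).ne'
  have hderiv : ∀ t, HasDerivAt F
      (∫ s in Icc a b, (-π s + σ * Real.log (μ t s) + σ) * μt t s) t := fun t ↦ by
    rw [show F = _ from funext hF]
    exact hasDerivAt_setIntegral_of_continuous (by fun_prop) (by fun_prop)
      (fun t s ↦ hasDerivAt_freeEnergyDensity (π s) σ (hμt t s) (hμpos t s).ne')
      isCompact_Icc t
  have hdissipation : ∀ t ∈ Ioo 0 T,
      ∫ s in Icc a b, (-π s + σ * Real.log (μ t s) + σ) * μt t s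
        = -∫ s in Icc a b, μ t s * (σ * μs t s / μ t s - dπ s) ^ 2 := fun t ht ↦ by
    rw [setIntegral_congr_fun measurableSet_Icc fun s hs ↦ by
      rw [hPDE t ht s hs, show -π s + σ * Real.log (μ t s) + σ = σ * Real.log (μ t s) - π s + σ
        by ring]]
    simp only [integral_Icc_eq_integral_Ioc, ← intervalIntegral.integral_of_le hab.le]
    exact integral_chemicalPotential_mul_deriv_flux hπ hdπ hdπ2cont (hμs t) (hμss t)
      (hμsscont.comp (.prodMk_right t)) (hμpos t) (hbc_a t ht) (hbc_b t ht)
  have hnonpos : ∀ t, -∫ s in Icc a b, μ t s * (σ * μs t s / μ t s - dπ s) ^ 2 ≤ 0 := fun t ↦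
    neg_nonpos.2 <| setIntegral_nonneg measurableSet_Icc fun s _ ↦
      mul_nonneg (hμpos t s).le (sq_nonneg _)
  refine ⟨fun t ht ↦ ⟨hdissipation t ht ▸ hderiv t, hnonpos t⟩, ?_⟩
  refine antitoneOn_of_hasDerivWithinAt_nonpos (convex_Icc 0 T)
    (continuous_iff_continuousAt.2 fun t ↦ (hderiv t).continuousAt).continuousOn
    (fun t _ ↦ (hderiv t).hasDerivWithinAt) fun t ht ↦ ?_
  rw [interior_Icc] at ht
  exact hdissipation t ht ▸ hnonpos t

/-- H-theorem (free-energy dissipation) for the Fokker–Planck dynamics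
`∂μ/∂t = ∂/∂s(σ·∂μ/∂s − μ·∂π/∂s)` on the compact interval `Ω = [a, b]` with no-flux
boundary conditions: along a positive classical solution, the free energy
`F(t) = ∫_Ω (−π·μ + σ·μ·ln μ) ds` is differentiable in `t ∈ (0, T)` with
`F'(t) = −∫_Ω μ·(∂/∂s(σ·ln μ − π))² ds ≤ 0`, hence `F` is non-increasing on `[0, T]`. -/
theorem free_energy_dissipation
    (a b σ T : ℝ) (hab : a < b) (hσ : 0 < σ) (hT : 0 < T)
    (π dπ dπ2 : ℝ → ℝ)
    (hπ : ∀ s, HasDerivAt π (dπ s) s)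
    (hdπ : ∀ s, HasDerivAt dπ (dπ2 s) s)
    (hdπ2cont : Continuous dπ2)
    (μ μt μs μss : ℝ → ℝ → ℝ)
    (hμt : ∀ t s, HasDerivAt (fun t' => μ t' s) (μt t s) t)
    (hμs : ∀ t s, HasDerivAt (fun s' => μ t s') (μs t s) s)
    (hμss : ∀ t s, HasDerivAt (fun s' => μs t s') (μss t s) s)
    (hμcont : Continuous fun p : ℝ × ℝ => μ p.1 p.2)
    (hμtcont : Continuous fun p : ℝ × ℝ => μt p.1 p.2)
    (hμscont : Continuous fun p : ℝ × ℝ => μs p.1 p.2)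
    (hμsscont : Continuous fun p : ℝ × ℝ => μss p.1 p.2)
    (hμpos : ∀ t s, 0 < μ t s)
    (hPDE : ∀ t ∈ Ioo 0 T, ∀ s ∈ Icc a b,
      μt t s = σ * μss t s - (μs t s * dπ s + μ t s * dπ2 s))
    (hbc_a : ∀ t ∈ Ioo 0 T, σ * μs t a - μ t a * dπ a = 0)
    (hbc_b : ∀ t ∈ Ioo 0 T, σ * μs t b - μ t b * dπ b = 0)
    (F : ℝ → ℝ)
    (hF : ∀ t, F t = ∫ s in Icc a b,
      (-(π s * μ t s) + σ * μ t s * Real.log (μ t s))) :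
    (∀ t ∈ Ioo 0 T,
      HasDerivAt F
        (-∫ s in Icc a b, μ t s * (σ * μs t s / μ t s - dπ s) ^ 2) t ∧
      (-∫ s in Icc a b, μ t s * (σ * μs t s / μ t s - dπ s) ^ 2) ≤ 0) ∧
    AntitoneOn F (Icc 0 T) :=
  free_energy_dissipation_general a b σ T hab π dπ dπ2 hπ hdπ hdπ2cont μ μt μs μss hμt hμs hμss
    hμcont hμtcont hμsscont hμpos hPDE hbc_a hbc_b F hF
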